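/- arXiv:2410.16584 — 2 statements merged into one kernel-verified Lean document; each statement's English description precedes it below -/
import Mathlib

section
/- Let p ≥ 1 be an odd integer, h an integer coprime to p, and ζ = e^{2πi/p}. Then ((h/p + 1/2)) equals (i/(2p)) · Σ_{n=1}^{p−1} (−1)^n csc(πn/p) · ζ^{hn}. -/
open Real Complex

/-!
Since `csc θ = 2i e^{iθ} / (e^{2iθ} - 1)` and `(-1)^n e^{iπn/p} = ζ^{n(p+1)/2}`, the `n`-th term
of the sum is `2i ζ^{mn} / (ζ^n - 1)` with `m = h + (p+1)/2`. For `x^p = 1 ≠ x` one has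
`1 / (x - 1) = (1/p) ∑_{a<p} a x^a`; substituting this and summing over `n` first, orthogonality of
the characters `n ↦ ζ^{(m+a)n}` leaves `2i (a₀ - (p-1)/2)` with `a₀ = -m mod p`. On the other side
`h/p + 1/2 = k - (2a₀+1)/(2p)` for an integer `k`, so the sawtooth value is `1/2 - (2a₀+1)/(2p)`.
-/

/-- The sawtooth function: `((r)) = 0` if `r ∈ ℤ`, else `r − ⌊r⌋ − 1/2`. -/
noncomputable def sawtooth (r : ℝ) : ℝ :=
  if Int.fract r = 0 then 0 else r - ⌊r⌋ - 1 / 2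

open Finset

theorem sawtooth_intCast_sub {δ : ℝ} (k : ℤ) (hδ₀ : 0 < δ) (hδ₁ : δ < 1) :
    sawtooth (k - δ) = 1 / 2 - δ := by
  have hfloor : ⌊(k : ℝ) - δ⌋ = k - 1 := by
    rw [Int.floor_eq_iff]; push_cast; constructor <;> linarith
  have hfract : Int.fract ((k : ℝ) - δ) ≠ 0 := by
    rw [Int.fract, hfloor]; push_cast; linarith
  rw [sawtooth, if_neg hfract, hfloor]; push_cast; ring

theorem sum_range_natCast_mul_pow_mul_sub_one {R : Type*} [CommRing R] (x : R) (p : ℕ) :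
    (∑ a ∈ range p, (a : R) * x ^ a) * (x - 1) = p * x ^ p - x * ∑ a ∈ range p, x ^ a := by
  induction p with
  | zero => simp
  | succ p ih => rw [sum_range_succ, sum_range_succ, add_mul, ih]; push_cast; ring

theorem sum_range_natCast_mul_pow_of_pow_eq_one {K : Type*} [Field K] {x : K} {p : ℕ}
    (hx : x ≠ 1) (hxp : x ^ p = 1) :
    ∑ a ∈ range p, (a : K) * x ^ a = p / (x - 1) := by
  have hgeom : ∑ a ∈ range p, x ^ a = 0 := by rw [geom_sum_eq hx, hxp, sub_self, zero_div]
  rw [eq_div_iff (sub_ne_zero.mpr hx), sum_range_natCast_mul_pow_mul_sub_one, hgeom, hxp]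
  ring

theorem sum_range_natCast {K : Type*} [Field K] [CharZero K] (p : ℕ) :
    ∑ a ∈ range p, (a : K) = p * ((p : K) - 1) / 2 := by
  rcases p.eq_zero_or_pos with rfl | hp
  · simp
  rw [eq_div_iff two_ne_zero, ← Nat.cast_sum, ← Nat.cast_ofNat, ← Nat.cast_mul,
    sum_range_id_mul_two, Nat.cast_mul, Nat.cast_sub hp, Nat.cast_one]

theorem Int.dvd_add_iff_eq_neg_emod {p m a : ℤ} (ha₀ : 0 ≤ a) (hap : a < p) :
    p ∣ m + a ↔ a = -m % p := by
  rw [← Int.emod_eq_of_lt ha₀ hap, eq_comm, ← Int.ModEq, Int.modEq_iff_dvd, sub_neg_eq_add,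
    add_comm, Int.emod_eq_of_lt ha₀ hap]

theorem sum_range_ite_dvd_add {K : Type*} [AddCommGroupWithOne K] {p : ℕ} (hp : p ≠ 0)
    (m : ℤ) :
    ∑ a ∈ range p, (if (p : ℤ) ∣ m + a then (a : K) else 0) = ((-m % p : ℤ) : K) := by
  have hp' : (0 : ℤ) < p := by exact_mod_cast Nat.pos_of_ne_zero hp
  have h₀ : 0 ≤ -m % p := Int.emod_nonneg _ hp'.ne'
  have hlt : -m % p < p := Int.emod_lt_of_pos _ hp'
  rw [sum_eq_single_of_mem (-m % p).toNat (mem_range.mpr (by omega))]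
  · rw [if_pos ((Int.dvd_add_iff_eq_neg_emod (by omega) (by omega)).mpr (by omega))]
    exact_mod_cast congrArg (Int.cast : ℤ → K) (Int.toNat_of_nonneg h₀)
  · intro a ha hne
    exact if_neg (by rw [Int.dvd_add_iff_eq_neg_emod (by omega) (by simpa using ha)]; omega)

namespace IsPrimitiveRoot

variable {K : Type*} [Field K] {ζ : K} {p : ℕ}

theorem sum_range_zpow_mul (hζ : IsPrimitiveRoot ζ p) (m : ℤ) :
    ∑ n ∈ range p, ζ ^ (m * n) = if (p : ℤ) ∣ m then (p : K) else 0 := by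
  simp_rw [zpow_mul, zpow_natCast]
  split_ifs with hm
  · simp [(hζ.zpow_eq_one_iff_dvd m).mpr hm]
  · rw [geom_sum_eq (fun h ↦ hm ((hζ.zpow_eq_one_iff_dvd m).mp h)), ← zpow_natCast,
      ← zpow_mul, mul_comm, zpow_mul, zpow_natCast, hζ.pow_eq_one, one_zpow, sub_self, zero_div]

theorem sum_Ico_one_zpow_mul (hζ : IsPrimitiveRoot ζ p) (hp : p ≠ 0) (m : ℤ) :
    ∑ n ∈ Ico 1 p, ζ ^ (m * n) = if (p : ℤ) ∣ m then (p : K) - 1 else -1 := by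
  have hrange := hζ.sum_range_zpow_mul m
  rw [sum_range_eq_add_Ico _ (Nat.pos_of_ne_zero hp)] at hrange
  rw [Nat.cast_zero, mul_zero, zpow_zero] at hrange
  split_ifs at hrange ⊢ <;> linear_combination hrange

theorem zpow_mul_div_pow_sub_one_eq (hζ : IsPrimitiveRoot ζ p) {n : ℕ} (hn : n ∈ Ico 1 p)
    (m : ℤ) :
    ζ ^ (m * n) / (ζ ^ n - 1) = (p : K)⁻¹ * ∑ a ∈ range p, (a : K) * ζ ^ ((m + a) * n) := by
  obtain ⟨hn₀, hnp⟩ := mem_Ico.mp hn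
  have hn₁ : ζ ^ n ≠ 1 := hζ.pow_ne_one_of_pos_of_lt (by omega) hnp
  have hζn : (ζ ^ n) ^ p = 1 := by rw [← pow_mul, mul_comm, pow_mul, hζ.pow_eq_one, one_pow]
  have hsum : ∑ a ∈ range p, (a : K) * ζ ^ ((m + a) * n) =
      ζ ^ (m * n) * ∑ a ∈ range p, (a : K) * (ζ ^ n) ^ a := by
    rw [mul_sum]
    refine sum_congr rfl fun a _ ↦ ?_
    rw [add_mul, zpow_add₀ (hζ.ne_zero (by omega)), ← Nat.cast_mul, zpow_natCast, mul_comm a n,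
      pow_mul]
    ring
  have : NeZero p := ⟨by omega⟩
  rw [hsum, sum_range_natCast_mul_pow_of_pow_eq_one hn₁ hζn, mul_div_left_comm,
    inv_mul_cancel_left₀ hζ.neZero'.out]

theorem sum_Ico_zpow_mul_div_pow_sub_one [CharZero K] (hζ : IsPrimitiveRoot ζ p) (hp : p ≠ 0)
    (m : ℤ) :
    ∑ n ∈ Ico 1 p, ζ ^ (m * n) / (ζ ^ n - 1) = ((-m % p : ℤ) : K) - ((p : K) - 1) / 2 := by
  have hpK : (p : K) ≠ 0 := Nat.cast_ne_zero.mpr hp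
  calc ∑ n ∈ Ico 1 p, ζ ^ (m * n) / (ζ ^ n - 1)
      = (p : K)⁻¹ * ∑ a ∈ range p, (a : K) * ∑ n ∈ Ico 1 p, ζ ^ ((m + a) * n) := by
        rw [sum_congr rfl fun n hn ↦ hζ.zpow_mul_div_pow_sub_one_eq hn m, ← mul_sum, sum_comm]
        simp_rw [mul_sum]
    _ = (p : K)⁻¹ * ∑ a ∈ range p, (a : K) * if (p : ℤ) ∣ m + a then (p : K) - 1 else -1 := by
        simp_rw [hζ.sum_Ico_one_zpow_mul hp]
    _ = ∑ a ∈ range p, (if (p : ℤ) ∣ m + a then (a : K) else 0) -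
          (p : K)⁻¹ * ∑ a ∈ range p, (a : K) := by
        rw [mul_sum, mul_sum, ← sum_sub_distrib]
        refine sum_congr rfl fun a _ ↦ ?_
        split_ifs <;> field_simp; ring
    _ = ((-m % p : ℤ) : K) - ((p : K) - 1) / 2 := by
        rw [sum_range_ite_dvd_add hp, sum_range_natCast]
        field_simp

end IsPrimitiveRoot

theorem Complex.inv_sin_eq_exp_div (z : ℂ) :
    (sin z)⁻¹ = 2 * I * exp (z * I) / (exp (2 * z * I) - 1) := by
  have h : exp (2 * z * I) - 1 = 2 * I * exp (z * I) * sin z := by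
    have hinv : exp (-z * I) * exp (z * I) = 1 := by rw [← exp_add]; simp
    have hsq : exp (2 * z * I) = exp (z * I) ^ 2 := by rw [← Complex.exp_nat_mul]; ring_nf
    rw [Complex.sin, hsq]
    linear_combination hinv + (exp (z * I) ^ 2 - exp (-z * I) * exp (z * I)) * I_sq
  rw [h, div_mul_cancel_left₀ (by simp [exp_ne_zero])]

theorem neg_one_pow_mul_inv_sin_mul_zpow {p q : ℕ} (hpq : p = 2 * q + 1) (h : ℤ) (n : ℕ) :
    (-1 : ℂ) ^ n * ((1 / Real.sin (π * n / p) : ℝ) : ℂ) * exp (2 * π * I / p) ^ (h * n) =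
      2 * I * (exp (2 * π * I / p) ^ ((h + (q + 1)) * n) / (exp (2 * π * I / p) ^ n - 1)) := by
  have hp : (p : ℂ) ≠ 0 := by rw [hpq]; exact_mod_cast (2 * q).succ_ne_zero
  have hsq : exp (2 * (π * n / p : ℝ) * I) = exp (2 * π * I / p) ^ n := by
    rw [← Complex.exp_nat_mul]; congr 1; push_cast; ring
  have hshift : (-1 : ℂ) ^ n * exp ((π * n / p : ℝ) * I) * exp (2 * π * I / p) ^ (h * n) =
      exp (2 * π * I / p) ^ ((h + (q + 1)) * n) := by
    rw [← exp_pi_mul_I, ← Complex.exp_nat_mul, ← exp_int_mul, ← exp_int_mul, ← Complex.exp_add,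
      ← Complex.exp_add]
    congr 1
    push_cast
    field_simp
    rw [hpq]; push_cast; ring
  rw [ofReal_div, ofReal_one, one_div, ofReal_sin, inv_sin_eq_exp_div, hsq, ← hshift]
  ring

theorem sawtooth_div_add_one_half {p q : ℕ} (hpq : p = 2 * q + 1) (h : ℤ) :
    sawtooth (h / p + 1 / 2) = 1 / 2 - (2 * (-(h + (q + 1)) % p : ℤ) + 1) / (2 * p) := by
  set a₀ := -(h + (q + 1)) % p
  have ha₀ : 0 ≤ a₀ ∧ a₀ < p := ⟨Int.emod_nonneg _ (by omega), Int.emod_lt_of_pos _ (by omega)⟩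
  obtain ⟨k, hk⟩ : (p : ℤ) ∣ h + (q + 1) + a₀ := (Int.dvd_add_iff_eq_neg_emod ha₀.1 ha₀.2).mpr rfl
  have hpR : (p : ℝ) = 2 * q + 1 := by exact_mod_cast hpq
  have hkR : (h : ℝ) + (q + 1) + a₀ = p * k := by exact_mod_cast hk
  have hp₀ : (0 : ℝ) < p := by rw [hpR]; positivity
  have harg : (h : ℝ) / p + 1 / 2 = k - (2 * a₀ + 1) / (2 * p) := by
    field_simp
    linear_combination 2 * hkR + hpR
  have ha₀R : (0 : ℝ) ≤ a₀ := by exact_mod_cast ha₀.1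
  have ha₀R' : (a₀ : ℝ) + 1 ≤ p := by exact_mod_cast ha₀.2
  rw [harg, sawtooth_intCast_sub k (by positivity) (by rw [div_lt_one (by positivity)]; linarith)]

theorem stmt_3_general (p : ℕ) (h : ℤ) (hodd : Odd p) :
    (sawtooth ((h : ℝ) / p + 1 / 2) : ℂ)
      = Complex.I / (2 * p) *
        ∑ n ∈ Finset.Icc 1 (p - 1),
          (-1 : ℂ) ^ n * ((1 / Real.sin (Real.pi * n / p) : ℝ) : ℂ) *
            Complex.exp (2 * Real.pi * Complex.I / p) ^ (h * n) := by
  obtain ⟨q, hpq⟩ := hodd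
  have hp : p ≠ 0 := by omega
  have hIcc : Icc 1 (p - 1) = Ico 1 p := by ext; simp; omega
  rw [hIcc, sum_congr rfl fun n _ ↦ neg_one_pow_mul_inv_sin_mul_zpow hpq h n, ← mul_sum,
    (Complex.isPrimitiveRoot_exp p hp).sum_Ico_zpow_mul_div_pow_sub_one hp,
    sawtooth_div_add_one_half hpq h]
  push_cast
  field_simp
  linear_combination ((p : ℂ) - 2 * (-(h + (q + 1)) % p : ℤ) - 1) * I_sq

/-- For odd `p ≥ 1`, `h` coprime to `p`, and `ζ = e^{2πi/p}`:
`((h/p + 1/2)) = (i/(2p)) ∑_{n=1}^{p-1} (−1)^n csc(πn/p) ζ^{hn}`. -/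
theorem stmt_3 (p : ℕ) (h : ℤ) (hp : 1 ≤ p) (hodd : Odd p)
    (hco : Int.gcd h (p : ℤ) = 1) :
    (sawtooth ((h : ℝ) / p + 1 / 2) : ℂ)
      = Complex.I / (2 * p) *
        ∑ n ∈ Finset.Icc 1 (p - 1),
          (-1 : ℂ) ^ n * ((1 / Real.sin (Real.pi * n / p) : ℝ) : ℂ) *
            Complex.exp (2 * Real.pi * Complex.I / p) ^ (h * n) :=
  stmt_3_general p h hodd
end

section
/- Let p, q be coprime positive integers. The number of gaps of the semigroup S_{p,q} = {ap+bq : a,b ≥ 0} that are at least (p−1)(q−1)/2 equals the number of pairs (i,j) of integers with 0 < i < p, 0 < j < q and i/p + j/q ≤ (pq + p + q − 1)/(2pq). -/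
/-! By Sylvester's description, the gaps of `S_{p,q}` are exactly the numbers `pq - iq - jp` with
`0 < i < p` and `0 < j < q`, and `(i, j) ↦ iq + jp` is injective on this box because `p` and `q`
are coprime. Under `s = pq - iq - jp` the condition `(p-1)(q-1)/2 ≤ s` becomes
`i/p + j/q ≤ (pq + p + q - 1)/(2pq)`, so the two sets are in bijection. -/

namespace Nat.Coprime

variable {p q : ℕ}

theorem exists_lt_dvd_mul_add (hp : 0 < p) (hco : p.Coprime q) (s : ℕ) :
    ∃ i < p, p ∣ i * q + s := by
  have : NeZero p := ⟨hp.ne'⟩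
  have hq : IsUnit (q : ZMod p) := (ZMod.isUnit_iff_coprime q p).mpr hco.symm
  refine ⟨(-(s : ZMod p) * (q : ZMod p)⁻¹).val, ZMod.val_lt _, ?_⟩
  rw [← ZMod.natCast_eq_zero_iff]
  push_cast
  rw [ZMod.natCast_val, ZMod.cast_id, mul_assoc, ZMod.inv_mul_of_unit _ hq, mul_one,
    neg_add_cancel]

theorem mul_add_mul_inj (hco : p.Coprime q) {i j i' j' : ℕ} (hi : i < p) (hi' : i' < p)
    (h : i * q + j * p = i' * q + j' * p) : i = i' ∧ j = j' := by
  have hmod : i * q ≡ i' * q [MOD p] := by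
    simpa [Nat.ModEq, Nat.add_mul_mod_self_right] using congrArg (· % p) h
  obtain rfl : i = i' := by
    simpa [Nat.ModEq, Nat.mod_eq_of_lt hi, Nat.mod_eq_of_lt hi'] using
      hmod.cancel_right_of_coprime hco
  exact ⟨rfl, Nat.eq_of_mul_eq_mul_right (i.zero_le.trans_lt hi) (Nat.add_left_cancel h)⟩

theorem not_exists_eq_mul_add_mul_iff (hp : 0 < p) (hq : 0 < q) (hco : p.Coprime q) {s : ℕ} :
    (¬∃ a b : ℕ, s = a * p + b * q) ↔
      ∃ i j, 0 < i ∧ i < p ∧ 0 < j ∧ j < q ∧ i * q + j * p + s = p * q := by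
  constructor
  · intro hgap
    obtain ⟨i, hip, t, ht⟩ := exists_lt_dvd_mul_add hp hco s
    have hi : 0 < i := by
      refine Nat.pos_of_ne_zero fun hi => hgap ⟨t, 0, ?_⟩
      simpa [hi, mul_comm] using ht
    have ht0 : 0 < t := Nat.pos_of_ne_zero (by rintro rfl; nlinarith)
    have htq : t < q := by
      by_contra! htq
      refine hgap ⟨t - q, p - i, ?_⟩
      zify [htq, hip.le] at ht ⊢
      linarith
    refine ⟨i, q - t, hi, hip, by omega, by omega, ?_⟩
    zify [htq.le] at ht ⊢
    linarith
  · rintro ⟨i, j, hi, -, hj, -, hsum⟩ ⟨a, b, rfl⟩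
    have hsum' : (j + a) * p + (i + b) * q = p * q := by rw [← hsum]; ring
    have hdvd : p ∣ (i + b) * q :=
      (Nat.dvd_add_right (_root_.dvd_mul_left p _)).mp (hsum' ▸ _root_.dvd_mul_right p q)
    have hpib : p ≤ i + b := Nat.le_of_dvd (by omega) (hco.dvd_of_dvd_mul_right hdvd)
    nlinarith

end Nat.Coprime

theorem div_add_div_le_iff {p q : ℕ} (hp : 0 < p) (hq : 0 < q) (i j : ℕ) :
    (i : ℚ) / p + (j : ℚ) / q ≤ ((p : ℚ) * q + p + q - 1) / (2 * p * q) ↔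
      2 * ((i : ℚ) * q + j * p) ≤ p * q + p + q - 1 := by
  have hp' : (0 : ℚ) < p := by exact_mod_cast hp
  have hq' : (0 : ℚ) < q := by exact_mod_cast hq
  rw [div_add_div _ _ hp'.ne' hq'.ne', div_le_div_iff₀ (by positivity) (by positivity)]
  constructor <;> intro h <;> nlinarith [mul_pos hp' hq']

theorem mul_add_mul_le_of_div_add_div_le {p q : ℕ} (hp : 0 < p) (hq : 0 < q) {i j : ℕ}
    (h : (i : ℚ) / p + (j : ℚ) / q ≤ ((p : ℚ) * q + p + q - 1) / (2 * p * q)) :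
    i * q + j * p ≤ p * q := by
  have hp' : (1 : ℚ) ≤ p := by exact_mod_cast hp
  have hq' : (1 : ℚ) ≤ q := by exact_mod_cast hq
  have := (div_add_div_le_iff hp hq i j).mp h
  exact_mod_cast (show (i : ℚ) * q + j * p ≤ p * q by nlinarith)

theorem sub_one_mul_sub_one_div_two_le_iff {p q : ℕ} (hp : 0 < p) (hq : 0 < q) {i j s : ℕ}
    (h : i * q + j * p + s = p * q) :
    ((p : ℚ) - 1) * ((q : ℚ) - 1) / 2 ≤ s ↔
      (i : ℚ) / p + (j : ℚ) / q ≤ ((p : ℚ) * q + p + q - 1) / (2 * p * q) := by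
  have h' : (i : ℚ) * q + j * p + s = p * q := by exact_mod_cast h
  rw [div_add_div_le_iff hp hq]
  constructor <;> intro <;> linarith

/-- For coprime positive `p, q`, the number of gaps of `S_{p,q}` that are at least
`(p−1)(q−1)/2` equals the number of pairs `0 < i < p`, `0 < j < q` with
`i/p + j/q ≤ (pq + p + q − 1)/(2pq)`. -/
theorem stmt_16 (p q : ℕ) (hp : 0 < p) (hq : 0 < q) (hco : Nat.Coprime p q) :
    {s : ℕ | (¬∃ a b : ℕ, s = a * p + b * q) ∧
        ((p : ℚ) - 1) * ((q : ℚ) - 1) / 2 ≤ (s : ℚ)}.ncard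
      = {ij : ℕ × ℕ | 0 < ij.1 ∧ ij.1 < p ∧ 0 < ij.2 ∧ ij.2 < q ∧
          (ij.1 : ℚ) / p + (ij.2 : ℚ) / q
            ≤ ((p : ℚ) * q + p + q - 1) / (2 * p * q)}.ncard := by
  symm
  refine Set.ncard_congr (fun ij _ => p * q - (ij.1 * q + ij.2 * p)) ?_ ?_ ?_
  · rintro ⟨i, j⟩ ⟨hi, hip, hj, hjq, hij⟩
    have hsum := Nat.add_sub_of_le (mul_add_mul_le_of_div_add_div_le hp hq hij)
    exact ⟨(hco.not_exists_eq_mul_add_mul_iff hp hq).mpr ⟨i, j, hi, hip, hj, hjq, hsum⟩,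
      (sub_one_mul_sub_one_div_two_le_iff hp hq hsum).mpr hij⟩
  · rintro ⟨i, j⟩ ⟨i', j'⟩ ⟨-, hip, -, -, hij⟩ ⟨-, hi'p, -, -, hi'j'⟩ h
    dsimp only at hip hij hi'p hi'j' h
    have hle := mul_add_mul_le_of_div_add_div_le hp hq hij
    have hle' := mul_add_mul_le_of_div_add_div_le hp hq hi'j'
    obtain ⟨rfl, rfl⟩ := hco.mul_add_mul_inj hip hi'p
      (show i * q + j * p = i' * q + j' * p by omega)
    rfl
  · rintro s ⟨hgap, hs⟩
    obtain ⟨i, j, hi, hip, hj, hjq, hsum⟩ := (hco.not_exists_eq_mul_add_mul_iff hp hq).mp hgap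
    exact ⟨(i, j), ⟨hi, hip, hj, hjq, (sub_one_mul_sub_one_div_two_le_iff hp hq hsum).mp hs⟩,
      by simp only; omega⟩
end
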